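/- arXiv:1706.04030 — 2 statements merged into one kernel-verified Lean document; each statement's English description precedes it below -/
import Mathlib

section
/- Let p > m be positive integers of the same parity and z₀ > 0, z₀ ≠ 1. Then the ratio (z₀^{1−p} + z₀^{3−p} + ⋯ + z₀^{p−1}) / (z₀^{1−m} + z₀^{3−m} + ⋯ + z₀^{m−1}) is strictly greater than p/m. -/
/-!
Writing `z₀ = exp t` with `t ≠ 0`, the sum of `z₀ ^ (1 - n + 2i)` over `i < n` telescopes against
`sinh t` to `sinh (n t) / sinh t`, so the ratio is `sinh (p t) / sinh (m t)`. Since `sinh` is strictly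
convex on `[0, ∞)` and vanishes at `0`, the secant slope `sinh x / x` is strictly increasing there,
which gives `sinh (p t) / sinh (m t) > p / m`.
-/

open Finset Real

lemma strictConvexOn_sinh : StrictConvexOn ℝ (Set.Ici 0) sinh :=
  StrictMonoOn.strictConvexOn_of_deriv (convex_Ici 0) continuous_sinh.continuousOn <| by
    rw [Real.deriv_sinh, interior_Ici]
    exact cosh_strictMonoOn.mono Set.Ioi_subset_Ici_self

lemma sinh_div_self_lt_sinh_div_self {a b : ℝ} (ha : 0 < a) (hab : a < b) :
    sinh a / a < sinh b / b := by
  have hb := ha.trans hab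
  simpa using strictConvexOn_sinh.secant_strict_mono Set.self_mem_Ici ha.le hb.le
    ha.ne' hb.ne' hab

lemma div_lt_sinh_mul_div_sinh_mul {a b t : ℝ} (ha : 0 < a) (hab : a < b) (ht : t ≠ 0) :
    b / a < sinh (b * t) / sinh (a * t) := by
  wlog ht_pos : 0 < t generalizing t
  · simpa [sinh_neg, neg_div_neg_eq] using
      this (neg_ne_zero.2 ht) (neg_pos.2 (lt_of_le_of_ne (not_lt.1 ht_pos) ht))
  have hat := mul_pos ha ht_pos
  have key := sinh_div_self_lt_sinh_div_self hat (mul_lt_mul_of_pos_right hab ht_pos)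
  rw [div_lt_div_iff₀ hat (mul_pos (ha.trans hab) ht_pos)] at key
  rw [div_lt_div_iff₀ ha (sinh_pos_iff.2 hat)]
  nlinarith

lemma sum_exp_mul_sinh (t : ℝ) (n : ℕ) :
    (∑ i ∈ range n, exp ((1 - n + 2 * i) * t)) * sinh t = sinh (n * t) := by
  set f : ℕ → ℝ := fun i ↦ exp ((2 * i - n) * t)
  have hterm (i : ℕ) : exp ((1 - n + 2 * i) * t) * sinh t = (f (i + 1) - f i) / 2 := by
    simp only [f, sinh_eq, mul_div_assoc', mul_sub, ← exp_add]
    push_cast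
    ring_nf
  rw [sum_mul, sum_congr rfl fun i _ ↦ hterm i, ← sum_div, sum_range_sub, sinh_eq]
  simp only [f]
  ring_nf

lemma zpow_eq_exp_mul_log {z : ℝ} (hz : 0 < z) (k : ℤ) : z ^ k = exp (k * log z) := by
  rw [← rpow_intCast, rpow_def_of_pos hz, mul_comm]

lemma sum_zpow_eq_sinh_div {z : ℝ} (hz : 0 < z) (hz1 : z ≠ 1) (n : ℕ) :
    ∑ i ∈ range n, z ^ ((1 - n : ℤ) + 2 * i) = sinh (n * log z) / sinh (log z) := by
  have hsinh : sinh (log z) ≠ 0 := sinh_ne_zero.2 (log_ne_zero_of_pos_of_ne_one hz hz1)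
  rw [eq_div_iff hsinh, ← sum_exp_mul_sinh]
  push_cast [zpow_eq_exp_mul_log hz]
  rfl

theorem sum_ratio_gt_general (p m : ℕ) (hm : 0 < m) (hpm : m < p)
    (z₀ : ℝ) (hz : 0 < z₀) (hz1 : z₀ ≠ 1) :
    (∑ i ∈ Finset.range p, z₀ ^ ((1 - (p : ℤ)) + 2 * (i : ℤ))) /
      (∑ i ∈ Finset.range m, z₀ ^ ((1 - (m : ℤ)) + 2 * (i : ℤ))) > (p : ℝ) / m := by
  have hlog := log_ne_zero_of_pos_of_ne_one hz hz1
  rw [sum_zpow_eq_sinh_div hz hz1, sum_zpow_eq_sinh_div hz hz1,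
    div_div_div_cancel_right₀ (sinh_ne_zero.2 hlog)]
  exact div_lt_sinh_mul_div_sinh_mul (Nat.cast_pos.2 hm) (Nat.cast_lt.2 hpm) hlog

/-- For positive integers `p > m` of the same parity and `z₀ > 0`, `z₀ ≠ 1`,
`(z₀^{1−p} + z₀^{3−p} + ⋯ + z₀^{p−1}) / (z₀^{1−m} + z₀^{3−m} + ⋯ + z₀^{m−1}) > p/m`. -/
theorem sum_ratio_gt (p m : ℕ) (hm : 0 < m) (hpm : m < p) (hpar : p % 2 = m % 2)
    (z₀ : ℝ) (hz : 0 < z₀) (hz1 : z₀ ≠ 1) :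
    (∑ i ∈ Finset.range p, z₀ ^ ((1 - (p : ℤ)) + 2 * (i : ℤ))) /
      (∑ i ∈ Finset.range m, z₀ ^ ((1 - (m : ℤ)) + 2 * (i : ℤ))) > (p : ℝ) / m :=
  sum_ratio_gt_general p m hm hpm z₀ hz hz1
end

section
/- Let p, q be positive integers with q < p, r = p/q, and c ∈ ℂ∖{0}. The sum of the q-th powers of the inverses of the p roots of R(ζ) = c·ζ^p − r·ζ^q + (r−1) equals p/(r−1). -/
/-!
Every root `ζ` of `R` is nonzero (as `R(0) = r - 1 ≠ 0`) and satisfies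
`ζ^(-q) = (r - c ζ^(p-q)) / (r - 1)`, so the sum reduces to the power sum of degree `p - q`
of the roots of `R`. The coefficients of `R` in degrees `p - 1, …, q + 1` vanish, so by Vieta
the elementary symmetric functions of the roots of degrees `1, …, p - q - 1` vanish, and
Newton's identities give that power sum as `-(p - q) · (-r) / c`. Hence the sum is
`(p r - (p - q) r) / (r - 1) = q r / (r - 1) = p / (r - 1)`.
-/

open Finset in
theorem Multiset.sum_map_pow_eq_of_esymm_eq_zero {R : Type*} [CommRing R] (s : Multiset R)
    {k : ℕ} (hk : 0 < k) (h : ∀ j, 0 < j → j < k → s.esymm j = 0) :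
    (s.map (· ^ k)).sum = (-1) ^ (k + 1) * k * s.esymm k := by
  obtain ⟨n, f, rfl⟩ : ∃ n, ∃ f : Fin n → R, univ.val.map f = s :=
    ⟨_, s.toList.get, by rw [Fin.univ_val_map, List.ofFn_get, Multiset.coe_toList]⟩
  have newton := congrArg (MvPolynomial.aeval f)
    (MvPolynomial.psum_eq_mul_esymm_sub_sum (Fin n) R k hk)
  simp only [map_sub, map_mul, map_pow, map_neg, map_one, map_natCast, map_sum,
    MvPolynomial.aeval_esymm_eq_multiset_esymm, MvPolynomial.psum, MvPolynomial.aeval_X] at newton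
  have lower_terms : ∑ a ∈ HasAntidiagonal.antidiagonal k with a.1 ∈ Set.Ioo 0 k,
      (-1) ^ a.1 * (univ.val.map f).esymm a.1 * ∑ i, f i ^ a.2 = 0 :=
    Finset.sum_eq_zero fun a ha => by
      rw [Finset.mem_filter] at ha; rw [h a.1 ha.2.1 ha.2.2, mul_zero, zero_mul]
  rw [lower_terms, sub_zero, Finset.sum] at newton
  rwa [Multiset.map_map]

namespace Polynomial

variable {K : Type*} [Field K]

theorem sum_roots_pow_eq_of_coeff_eq_zero {P : K[X]} (hP : P.Splits) {k : ℕ} (hk : 0 < k)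
    (hkn : k ≤ P.natDegree) (h : ∀ j, 0 < j → j < k → P.coeff (P.natDegree - j) = 0) :
    (P.roots.map (· ^ k)).sum = -k * P.coeff (P.natDegree - k) / P.leadingCoeff := by
  have hlead : P.leadingCoeff ≠ 0 :=
    leadingCoeff_ne_zero.2 (ne_zero_of_natDegree_gt (hk.trans_le hkn))
  have vieta : ∀ j ≤ P.natDegree,
      P.coeff (P.natDegree - j) = P.leadingCoeff * (-1) ^ j * P.roots.esymm j := fun j hj => by
    rw [coeff_eq_esymm_roots_of_splits hP (Nat.sub_le _ _), Nat.sub_sub_self hj]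
  have lower_esymm : ∀ j, 0 < j → j < k → P.roots.esymm j = 0 := fun j hj hjk => by
    simpa [vieta j (hjk.le.trans hkn), hlead] using h j hj hjk
  rw [P.roots.sum_map_pow_eq_of_esymm_eq_zero hk lower_esymm, vieta k hkn]
  field_simp
  ring

variable {m n : ℕ} {u v w : K}

theorem coeff_trinomial_eq_zero {k i : ℕ} (hi : i ∉ ({k, m, n} : Finset ℕ)) :
    (trinomial k m n u v w).coeff i = 0 :=
  notMem_support_iff.1 fun hmem => hi (support_trinomial_subset k m n u v w hmem)

theorem sum_roots_pow_trinomial {k : ℕ} (hkm : k < m) (hmn : m < n) (hw : w ≠ 0)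
    (hsplit : (trinomial k m n u v w).Splits) :
    ((trinomial k m n u v w).roots.map (· ^ (n - m))).sum = -((n - m : ℕ) : K) * v / w := by
  rw [sum_roots_pow_eq_of_coeff_eq_zero hsplit (by omega), trinomial_natDegree hkm hmn hw,
    Nat.sub_sub_self hmn.le, trinomial_middle_coeff hkm hmn, trinomial_leadingCoeff hkm hmn hw]
  · rw [trinomial_natDegree hkm hmn hw]; omega
  · intro j hj hjk
    rw [trinomial_natDegree hkm hmn hw]
    exact coeff_trinomial_eq_zero (by simp; omega)

theorem inv_pow_eq_of_isRoot_trinomial (hm : 0 < m) (hmn : m < n) (hu : u ≠ 0) {ζ : K}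
    (hζ : (trinomial 0 m n u v w).IsRoot ζ) : ζ⁻¹ ^ m = -(v + w * ζ ^ (n - m)) / u := by
  have root_eq : u + v * ζ ^ m + w * ζ ^ n = 0 := by
    simpa [IsRoot, trinomial_def] using hζ
  have hζ0 : ζ ≠ 0 := by
    rintro rfl
    exact hu (by simpa [hm.ne', (hm.trans hmn).ne'] using root_eq)
  have pow_split : ζ ^ (n - m) * ζ ^ m = ζ ^ n := by rw [← pow_add, Nat.sub_add_cancel hmn.le]
  rw [inv_pow]
  field_simp
  linear_combination root_eq + w * pow_split

theorem sum_inv_roots_pow_trinomial (hm : 0 < m) (hmn : m < n) (hu : u ≠ 0) (hw : w ≠ 0)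
    (hsplit : (trinomial 0 m n u v w).Splits) :
    ((trinomial 0 m n u v w).roots.map fun ζ => ζ⁻¹ ^ m).sum = -(m * v) / u := by
  have hcard : Multiset.card (trinomial 0 m n u v w).roots = n :=
    (splits_iff_card_roots.1 hsplit).trans (trinomial_natDegree hm hmn hw)
  have termwise : (trinomial 0 m n u v w).roots.map (fun ζ => ζ⁻¹ ^ m) =
      (trinomial 0 m n u v w).roots.map (fun ζ => -v / u + (-w / u) * ζ ^ (n - m)) :=
    Multiset.map_congr rfl fun ζ hζ => by
      rw [inv_pow_eq_of_isRoot_trinomial hm hmn hu (isRoot_of_mem_roots hζ)]; ring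
  rw [termwise, Multiset.sum_map_add, Multiset.sum_map_mul_left, Multiset.map_const',
    Multiset.sum_replicate, hcard, sum_roots_pow_trinomial hm hmn hw hsplit, nsmul_eq_mul,
    Nat.cast_sub hmn.le]
  field_simp
  ring

end Polynomial

open Polynomial

/-- For `q < p`, `r = p/q`, `c ≠ 0`, the sum of the `q`-th powers of the
inverses of the `p` roots of `R(ζ) = c·ζ^p − r·ζ^q + (r−1)` equals `p/(r−1)`. -/
theorem sum_of_qth_powers_of_inverse_roots (p q : ℕ) (hq : 0 < q) (hpq : q < p)
    (c : ℂ) (hc : c ≠ 0) :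
    (((C c * X ^ p - C ((p : ℂ) / q) * X ^ q + C ((p : ℂ) / q - 1)).roots).map
        (fun ζ => (ζ⁻¹) ^ q)).sum = (p : ℂ) / ((p : ℂ) / q - 1) := by
  set r : ℂ := (p : ℂ) / q with hr
  have hq0 : (q : ℂ) ≠ 0 := Nat.cast_ne_zero.2 hq.ne'
  have hr1 : r - 1 ≠ 0 := by
    rw [hr, div_sub_one hq0]
    exact div_ne_zero (sub_ne_zero.2 (by exact_mod_cast hpq.ne')) hq0
  have as_trinomial : C c * X ^ p - C r * X ^ q + C (r - 1) = trinomial 0 q p (r - 1) (-r) c := by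
    rw [trinomial_def, C_neg]; ring
  rw [as_trinomial, sum_inv_roots_pow_trinomial hq hpq hr1 hc (IsAlgClosed.splits _), hr]
  field_simp
end
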